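/- Let X ⊆ 𝒜^ℤ be a C-balanced subshift over an alphabet of d letters. Then for every length L ≥ 1, the set of abelianisation vectors {Φ(w) : w ∈ 𝓛(X), |w| = L} has cardinality at most (C+1)^{d−1}. -/
import Mathlib


/-- The shift map on bi-infinite sequences. -/
def shift {A : Type} (x : ℤ → A) : ℤ → A := fun n => x (n + 1)

/-- The language of a set of bi-infinite sequences: all finite subwords. -/
def Lang {A : Type} (X : Set (ℤ → A)) : Set (List A) :=
  {w | ∃ x ∈ X, ∃ i : ℤ, ∀ j : Fin w.length, x (i + (j.val : ℤ)) = w.get j}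

/-- A subshift is `C`-balanced if occurrence counts of each letter in legal
words of equal length differ by at most `C`. -/
def CBalanced {A : Type} [DecidableEq A] (X : Set (ℤ → A)) (C : ℕ) : Prop :=
  ∀ a : A, ∀ w w' : List A, w ∈ Lang X → w' ∈ Lang X → w.length = w'.length →
    |(w.count a : ℤ) - (w'.count a : ℤ)| ≤ (C : ℤ)

/-- Counts of all letters sum to the length. -/
lemma sum_count_univ {A : Type} [Fintype A] [DecidableEq A] (l : List A) :
    ∑ a, l.count a = l.length := by
  induction l with
  | nil => simp
  | cons b t ih => simp [List.count_cons, Finset.sum_add_distrib, ih, add_comm]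

/-- in a `C`-balanced subshift over `d` letters, the set of
abelianisation vectors of legal words of any fixed length `L` has at most
`(C+1)^(d-1)` elements. -/
theorem balanced_abelianisation_count {A : Type} [Fintype A] [DecidableEq A]
    [TopologicalSpace A] [DiscreteTopology A]
    (X : Set (ℤ → A)) (hclosed : IsClosed X) (hne : X.Nonempty)
    (hinv : shift '' X = X) (C : ℕ) (hbal : CBalanced X C) :
    ∀ L : ℕ, 1 ≤ L →
      {f : A → ℕ | ∃ w ∈ Lang X, w.length = L ∧ ∀ a : A, w.count a = f a}.ncard
        ≤ (C + 1) ^ (Fintype.card A - 1) := by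
  intro L hL
  set S : Set (A → ℕ) :=
    {f : A → ℕ | ∃ w ∈ Lang X, w.length = L ∧ ∀ a : A, w.count a = f a} with hS
  rcases Set.eq_empty_or_nonempty S with hSe | hSne
  · rw [hSe]; simp
  -- A is nonempty since a word of length L ≥ 1 exists
  obtain ⟨f₀, w₀, hw₀X, hw₀L, hw₀c⟩ := hSne
  have hA : Nonempty A := by
    have : w₀ ≠ [] := by
      intro h; rw [h] at hw₀L; simp at hw₀L; omega
    exact ⟨w₀.head this⟩
  obtain ⟨a₀⟩ := hA
  -- for each letter, coordinates over S lie in an interval of length C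
  have key : ∀ a : A, ∃ m : ℕ, ∀ f ∈ S, m ≤ f a ∧ f a ≤ m + C := by
    intro a
    have hne' : ((fun f : A → ℕ => f a) '' S).Nonempty :=
      Set.Nonempty.image _ ⟨f₀, w₀, hw₀X, hw₀L, hw₀c⟩
    obtain ⟨g, hgS, hg⟩ := Nat.sInf_mem hne'
    replace hg : g a = sInf ((fun f : A → ℕ => f a) '' S) := hg
    refine ⟨g a, fun f hf => ?_⟩
    constructor
    · exact hg ▸ Nat.sInf_le ⟨f, hf, rfl⟩
    · clear hg hne'
      obtain ⟨w, hwX, hwL, hwc⟩ := hf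
      obtain ⟨w', hw'X, hw'L, hw'c⟩ := hgS
      have := hbal a w w' hwX hw'X (by omega)
      rw [hwc a, hw'c a] at this
      have := abs_le.mp this
      omega
  choose μ hμ using key
  have hμ_le : ∀ f ∈ S, ∀ a, μ a ≤ f a := fun f hf a => (hμ a f hf).1
  have hle_μ : ∀ f ∈ S, ∀ a, f a ≤ μ a + C := fun f hf a => (hμ a f hf).2
  -- the injection
  set F : S → ({a : A // a ≠ a₀} → Fin (C + 1)) :=
    fun f a => ⟨f.1 a.1 - μ a.1, by
      have h1 := hμ_le f.1 f.2 a.1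
      have h2 := hle_μ f.1 f.2 a.1
      omega⟩ with hF
  have hsum : ∀ f ∈ S, ∑ a, f a = L := by
    intro f hf
    obtain ⟨w, hwX, hwL, hwc⟩ := hf
    calc ∑ a, f a = ∑ a, w.count a := by
          exact Finset.sum_congr rfl fun a _ => (hwc a).symm
      _ = w.length := sum_count_univ w
      _ = L := hwL
  have hFinj : Function.Injective F := by
    intro f g hfg
    have hne0 : ∀ a : A, a ≠ a₀ → f.1 a = g.1 a := by
      intro a ha
      have := congrFun hfg ⟨a, ha⟩
      have hv : f.1 a - μ a = g.1 a - μ a := congrArg Fin.val this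
      have h1 := hμ_le f.1 f.2 a
      have h2 := hμ_le g.1 g.2 a
      omega
    have hsf := hsum f.1 f.2
    have hsg := hsum g.1 g.2
    have herase : ∑ a ∈ Finset.univ.erase a₀, f.1 a = ∑ a ∈ Finset.univ.erase a₀, g.1 a :=
      Finset.sum_congr rfl fun a ha => hne0 a (Finset.mem_erase.mp ha).1
    have hsplitf : f.1 a₀ + ∑ a ∈ Finset.univ.erase a₀, f.1 a = L := by
      rw [Finset.add_sum_erase _ _ (Finset.mem_univ a₀)]; exact hsf
    have hsplitg : g.1 a₀ + ∑ a ∈ Finset.univ.erase a₀, g.1 a = L := by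
      rw [Finset.add_sum_erase _ _ (Finset.mem_univ a₀)]; exact hsg
    have ha₀ : f.1 a₀ = g.1 a₀ := by omega
    apply Subtype.ext
    funext a
    by_cases h : a = a₀
    · rw [h]; exact ha₀
    · exact hne0 a h
  have hfin : Finite S := Finite.of_injective F hFinj
  have hcard : Nat.card S ≤ Nat.card ({a : A // a ≠ a₀} → Fin (C + 1)) :=
    Nat.card_le_card_of_injective F hFinj
  have htarget : Nat.card ({a : A // a ≠ a₀} → Fin (C + 1))
      = (C + 1) ^ (Fintype.card A - 1) := by
    rw [Nat.card_eq_fintype_card, Fintype.card_fun, Fintype.card_fin]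
    congr 1
    rw [Fintype.card_subtype_compl, Fintype.card_subtype_eq]
  rw [← Nat.card_coe_set_eq, ← htarget]
  exact hcard
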